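/- Let Q be symmetric, T Q-based β-cocoercive with β ≥ 1, b⋆ a fixed point of T, and b^{k+1} = T b^k. Then for all k: ‖b^{k+1} − b⋆‖_Q² ≤ (1/(2β−1)) ‖b^k − b⋆‖_Q² − (1/(2β−1)) ‖b^k − b^{k+1}‖_Q², and consequently Σ_{k=0}^{K} ‖b^k − b^{k+1}‖_Q² ≤ (2β−1) ‖b^0 − b⋆‖_Q² for every K (assuming Q positive semidefinite so that ‖·‖_Q² ≥ 0). -/
import Mathlib

open Matrix Finset

/-- Q-quadratic form: `‖a‖_Q² = ⟨Q a, a⟩`. -/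
noncomputable def qnorm {n : ℕ} (Q : Matrix (Fin n) (Fin n) ℝ) (a : Fin n → ℝ) : ℝ :=
  Q.mulVec a ⬝ᵥ a

/-- Q-based pairing: `⟨a, b⟩_Q = ⟨Q a, b⟩`. -/
noncomputable def qinner {n : ℕ} (Q : Matrix (Fin n) (Fin n) ℝ) (a b : Fin n → ℝ) : ℝ :=
  Q.mulVec a ⬝ᵥ b

lemma qinner_symm {n : ℕ} (Q : Matrix (Fin n) (Fin n) ℝ) (hQs : Qᵀ = Q)
    (a c : Fin n → ℝ) : qinner Q a c = qinner Q c a := by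
  unfold qinner
  rw [dotProduct_comm, dotProduct_mulVec, ← mulVec_transpose, hQs]

lemma qnorm_sub_expand {n : ℕ} (Q : Matrix (Fin n) (Fin n) ℝ) (hQs : Qᵀ = Q)
    (x y : Fin n → ℝ) :
    qnorm Q (x - y) = qnorm Q x - 2 * qinner Q x y + qnorm Q y := by
  have h := qinner_symm Q hQs y x
  unfold qnorm qinner at *
  simp only [Matrix.mulVec_sub, sub_dotProduct, dotProduct_sub] at *
  linarith

theorem stmt16 (n : ℕ) (Q : Matrix (Fin n) (Fin n) ℝ) (hQs : Qᵀ = Q)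
    (hQp : ∀ a, 0 ≤ qnorm Q a) (β : ℝ) (hβ : 1 ≤ β)
    (T : (Fin n → ℝ) → (Fin n → ℝ))
    (hT : ∀ b1 b2, qinner Q (b1 - b2) (T b1 - T b2) ≥ β * qnorm Q (T b1 - T b2))
    (bstar : Fin n → ℝ) (hfix : T bstar = bstar)
    (b : ℕ → (Fin n → ℝ)) (hb : ∀ k, b (k + 1) = T (b k)) :
    (∀ k, qnorm Q (b (k + 1) - bstar) ≤ 1 / (2 * β - 1) * qnorm Q (b k - bstar)
      - 1 / (2 * β - 1) * qnorm Q (b k - b (k + 1))) ∧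
    (∀ K : ℕ, ∑ k ∈ Finset.range (K + 1), qnorm Q (b k - b (k + 1)) ≤
      (2 * β - 1) * qnorm Q (b 0 - bstar)) := by
  have hpos : 0 < 2 * β - 1 := by linarith
  have key : ∀ k, (2 * β - 1) * qnorm Q (b (k + 1) - bstar) ≤
      qnorm Q (b k - bstar) - qnorm Q (b k - b (k + 1)) := by
    intro k
    have hco := hT (b k) bstar
    rw [hfix, ← hb k] at hco
    have hx : b k - bstar - (b (k + 1) - bstar) = b k - b (k + 1) := by
      abel
    have hexp := qnorm_sub_expand Q hQs (b k - bstar) (b (k + 1) - bstar)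
    rw [hx] at hexp
    linarith
  constructor
  · intro k
    rw [div_mul_eq_mul_div, div_mul_eq_mul_div, ← sub_div, le_div_iff₀ hpos]
    linarith [key k]
  · intro K
    have step : ∀ k, qnorm Q (b k - b (k + 1)) ≤
        qnorm Q (b k - bstar) - qnorm Q (b (k + 1) - bstar) := by
      intro k
      have h1 := key k
      have h2 := hQp (b (k + 1) - bstar)
      nlinarith
    calc ∑ k ∈ Finset.range (K + 1), qnorm Q (b k - b (k + 1))
        ≤ ∑ k ∈ Finset.range (K + 1),
            (qnorm Q (b k - bstar) - qnorm Q (b (k + 1) - bstar)) :=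
          Finset.sum_le_sum fun k _ => step k
      _ = qnorm Q (b 0 - bstar) - qnorm Q (b (K + 1) - bstar) :=
          Finset.sum_range_sub' (fun k => qnorm Q (b k - bstar)) (K + 1)
      _ ≤ (2 * β - 1) * qnorm Q (b 0 - bstar) := by
          nlinarith [hQp (b (K + 1) - bstar), hQp (b 0 - bstar)]
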